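/- Let D and E be pretriangulated categories, and let F: D → E be an exact (triangulated) functor, i.e., F commutes with the shift functors up to natural isomorphism and sends distinguished triangles to distinguished triangles. For a thick subcategory I of D, let ⟨F⟩(I) denote the smallest thick subcategory of E containing the image F(I); for a thick subcategory J of E, F^{-1}(J) := {a ∈ D | F(a) ∈ J} is a thick subcategory of D; and for a prime thick subcategory P, let P̄ denote the intersection of all thick subcategories strictly containing P. Then the following are equivalent: (1) ⟨F⟩ is injective on thick subcategories of D; (2) F^{-1}, from thick subcategories of E to thick subcategories of D, is surjective; (3) for every prime thick subcategory P of D, ⟨F⟩(P) ≠ ⟨F⟩(P̄); (4) for every prime thick subcategory P of D, there exists a prime thick subcategory Q of E with F^{-1}(Q) = P and F^{-1}(Q̄) ⊋ P; (5) F^{-1} ∘ ⟨F⟩ is the identity map on thick subcategories of D. -/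

import Mathlib

/-!
`I ↦ ⟨F(I)⟩` and `J ↦ F⁻¹(J)` form a Galois connection between thick subcategories of `D` and
of `E`, so (1), (2) and (5) all say that its unit is the identity. By Zorn's lemma, a thick
subcategory maximal among those avoiding an object `x` is prime and has `x` in its `P̄`. Hence
every thick subcategory is the intersection of the primes containing it, so (5) only has to be
checked on primes, where (4) gives it. Conversely, under (3) some `x ∈ P̄` has `F(x) ∉ ⟨F(P)⟩`,
and a thick `Q ⊇ ⟨F(P)⟩` maximal among those avoiding `F(x)` is the prime required in (4).
-/

open CategoryTheory CategoryTheory.Limits CategoryTheory.Pretriangulated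

universe v u v' u'

/-- A thick subcategory of a pretriangulated category, viewed as a class of objects:
it contains the zero objects and is closed under isomorphisms, shifts in both
directions, extensions, and retracts. -/
structure IsThickSubcat {C : Type u} [Category.{v} C] [Preadditive C] [HasZeroObject C]
    [HasShift C ℤ] [∀ n : ℤ, (shiftFunctor C n).Additive] [Pretriangulated C]
    (P : Set C) : Prop where
  zero_mem : ∀ X : C, IsZero X → X ∈ P
  iso_mem : ∀ {X Y : C}, (X ≅ Y) → X ∈ P → Y ∈ P
  shift_mem : ∀ (X : C) (n : ℤ), X ∈ P → X⟦n⟧ ∈ P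
  ext_mem : ∀ T ∈ distTriang C, T.obj₁ ∈ P → T.obj₃ ∈ P → T.obj₂ ∈ P
  retract_mem : ∀ (X Y : C), X ∈ P → ∀ (i : Y ⟶ X) (r : X ⟶ Y), i ≫ r = 𝟙 Y → Y ∈ P

variable {C : Type u} [Category.{v} C] [Preadditive C] [HasZeroObject C]
  [HasShift C ℤ] [∀ n : ℤ, (shiftFunctor C n).Additive] [Pretriangulated C]

/-- The smallest thick subcategory containing a class of objects `W`. -/
def thickClosure (W : Set C) : Set C := ⋂₀ {P : Set C | IsThickSubcat P ∧ W ⊆ P}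

/-- `P̄`: the intersection of all thick subcategories strictly containing `P`. -/
def thickInterAbove (P : Set C) : Set C := ⋂₀ {Q : Set C | IsThickSubcat Q ∧ P ⊂ Q}

/-- A prime thick subcategory: a thick subcategory `P` with `P ⊊ P̄`. -/
def IsPrimeThick (P : Set C) : Prop := IsThickSubcat P ∧ P ⊂ thickInterAbove P

lemma IsThickSubcat.sInter {S : Set (Set C)} (hS : ∀ P ∈ S, IsThickSubcat P) :
    IsThickSubcat (⋂₀ S) where
  zero_mem X hX P hP := (hS P hP).zero_mem X hX
  iso_mem e h P hP := (hS P hP).iso_mem e (h P hP)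
  shift_mem X n h P hP := (hS P hP).shift_mem X n (h P hP)
  ext_mem T hT h₁ h₃ P hP := (hS P hP).ext_mem T hT (h₁ P hP) (h₃ P hP)
  retract_mem X Y h i r hir P hP := (hS P hP).retract_mem X Y (h P hP) i r hir

lemma IsThickSubcat.sUnion_of_isChain {S : Set (Set C)} (hS : ∀ P ∈ S, IsThickSubcat P)
    (hchain : IsChain (· ⊆ ·) S) (hne : S.Nonempty) : IsThickSubcat (⋃₀ S) where
  zero_mem X hX :=
    let ⟨P, hP⟩ := hne
    ⟨P, hP, (hS P hP).zero_mem X hX⟩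
  iso_mem e := fun ⟨P, hP, hX⟩ => ⟨P, hP, (hS P hP).iso_mem e hX⟩
  shift_mem X n := fun ⟨P, hP, hX⟩ => ⟨P, hP, (hS P hP).shift_mem X n hX⟩
  ext_mem T hT := by
    rintro ⟨P, hP, h₁⟩ ⟨Q, hQ, h₃⟩
    rcases hchain.total hP hQ with hPQ | hQP
    · exact ⟨Q, hQ, (hS Q hQ).ext_mem T hT (hPQ h₁) h₃⟩
    · exact ⟨P, hP, (hS P hP).ext_mem T hT h₁ (hQP h₃)⟩
  retract_mem X Y := fun ⟨P, hP, hX⟩ i r hir => ⟨P, hP, (hS P hP).retract_mem X Y hX i r hir⟩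

lemma isThickSubcat_thickClosure (W : Set C) : IsThickSubcat (thickClosure W) :=
  IsThickSubcat.sInter fun _ hP => hP.1

lemma subset_thickClosure (W : Set C) : W ⊆ thickClosure W :=
  fun _ hx _ hP => hP.2 hx

lemma thickClosure_subset_iff {W J : Set C} (hJ : IsThickSubcat J) :
    thickClosure W ⊆ J ↔ W ⊆ J :=
  ⟨(subset_thickClosure W).trans, fun hWJ => Set.sInter_subset_of_mem ⟨hJ, hWJ⟩⟩

lemma thickClosure_mono {V W : Set C} (h : V ⊆ W) : thickClosure V ⊆ thickClosure W :=
  (thickClosure_subset_iff (isThickSubcat_thickClosure W)).2 (h.trans (subset_thickClosure W))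

lemma isThickSubcat_thickInterAbove (P : Set C) : IsThickSubcat (thickInterAbove P) :=
  IsThickSubcat.sInter fun _ hQ => hQ.1

lemma subset_thickInterAbove (P : Set C) : P ⊆ thickInterAbove P :=
  fun _ hx _ hQ => hQ.2.1 hx

lemma thickInterAbove_subset {P R : Set C} (hR : IsThickSubcat R) (hPR : P ⊂ R) :
    thickInterAbove P ⊆ R :=
  Set.sInter_subset_of_mem ⟨hR, hPR⟩

lemma exists_isPrimeThick_of_notMem {A : Set C} (hA : IsThickSubcat A) {x : C} (hx : x ∉ A) :
    ∃ P : Set C, A ⊆ P ∧ IsPrimeThick P ∧ x ∉ P ∧ x ∈ thickInterAbove P := by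
  obtain ⟨P, hAP, hmax⟩ := zorn_subset_nonempty {Q : Set C | IsThickSubcat Q ∧ A ⊆ Q ∧ x ∉ Q}
    (fun c hc hchain ⟨Q, hQ⟩ =>
      ⟨⋃₀ c, ⟨.sUnion_of_isChain (fun R hR => (hc hR).1) hchain ⟨Q, hQ⟩,
          (hc hQ).2.1.trans (Set.subset_sUnion_of_mem hQ),
          fun ⟨R, hR, hxR⟩ => (hc hR).2.2 hxR⟩,
        fun _ => Set.subset_sUnion_of_mem⟩)
    A ⟨hA, subset_rfl, hx⟩
  obtain ⟨hP, -, hxP⟩ := hmax.prop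
  have hxbar : x ∈ thickInterAbove P := fun R ⟨hR, hPR⟩ => by
    by_contra hxR
    exact hPR.2 (hmax.2 ⟨hR, hAP.trans hPR.1, hxR⟩ hPR.1)
  exact ⟨P, hAP, ⟨hP, subset_thickInterAbove P, fun h => hxP (h hxbar)⟩, hxP, hxbar⟩

lemma IsThickSubcat.sInter_isPrimeThick_eq {I : Set C} (hI : IsThickSubcat I) :
    ⋂₀ {P : Set C | IsPrimeThick P ∧ I ⊆ P} = I := by
  refine subset_antisymm (fun x hx => ?_) fun _ hx _ hP => hP.2 hx
  by_contra hxI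
  obtain ⟨P, hIP, hP, hxP, -⟩ := exists_isPrimeThick_of_notMem hI hxI
  exact hxP (hx P ⟨hP, hIP⟩)

section Functor

variable {D : Type u} [Category.{v} D] {E : Type u'} [Category.{v'} E] [Preadditive E] [HasZeroObject E]
  [HasShift E ℤ] [∀ n : ℤ, (shiftFunctor E n).Additive] [Pretriangulated E]
  {F : D ⥤ E}

lemma thickClosure_image_subset_iff {I : Set D} {J : Set E} (hJ : IsThickSubcat J) :
    thickClosure (F.obj '' I) ⊆ J ↔ I ⊆ F.obj ⁻¹' J :=
  (thickClosure_subset_iff hJ).trans Set.image_subset_iff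

lemma subset_preimage_thickClosure_image (I : Set D) :
    I ⊆ F.obj ⁻¹' thickClosure (F.obj '' I) :=
  (thickClosure_image_subset_iff (isThickSubcat_thickClosure _)).1 subset_rfl

lemma thickClosure_image_preimage_thickClosure_image (I : Set D) :
    thickClosure (F.obj '' (F.obj ⁻¹' thickClosure (F.obj '' I))) = thickClosure (F.obj '' I) :=
  subset_antisymm ((thickClosure_image_subset_iff (isThickSubcat_thickClosure _)).2 subset_rfl)
    (thickClosure_mono (Set.image_mono (subset_preimage_thickClosure_image I)))

lemma preimage_thickClosure_image_eq_of_preimage_eq {I : Set D} {J : Set E}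
    (hJ : IsThickSubcat J) (hJI : F.obj ⁻¹' J = I) :
    F.obj ⁻¹' thickClosure (F.obj '' I) = I := by
  subst hJI
  exact subset_antisymm (Set.preimage_mono ((thickClosure_image_subset_iff hJ).2 subset_rfl))
    (subset_preimage_thickClosure_image _)

section Pretriangulated

variable [Preadditive D] [HasZeroObject D] [HasShift D ℤ]
  [∀ n : ℤ, (shiftFunctor D n).Additive] [Pretriangulated D]

lemma IsThickSubcat.preimage [F.CommShift ℤ] [F.IsTriangulated] {J : Set E}
    (hJ : IsThickSubcat J) : IsThickSubcat (F.obj ⁻¹' J) where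
  zero_mem X hX := hJ.zero_mem _ (F.map_isZero hX)
  iso_mem e := hJ.iso_mem (F.mapIso e)
  shift_mem X n h := hJ.iso_mem ((F.commShiftIso n).symm.app X) (hJ.shift_mem (F.obj X) n h)
  ext_mem T hT := hJ.ext_mem (F.mapTriangle.obj T) (F.map_distinguished T hT)
  retract_mem X Y h i r hir :=
    hJ.retract_mem (F.obj X) (F.obj Y) h (F.map i) (F.map r) (by rw [← F.map_comp, hir, F.map_id])

lemma preimage_thickClosure_image_eq_of_isPrimeThick
    (h : ∀ P : Set D, IsPrimeThick P → ∃ Q : Set E, IsThickSubcat Q ∧ F.obj ⁻¹' Q = P)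
    {I : Set D} (hI : IsThickSubcat I) :
    F.obj ⁻¹' thickClosure (F.obj '' I) = I := by
  refine subset_antisymm ?_ (subset_preimage_thickClosure_image I)
  refine (Set.subset_sInter fun P hP => ?_).trans hI.sInter_isPrimeThick_eq.subset
  obtain ⟨hP, hIP⟩ := hP
  obtain ⟨Q, hQ, hQP⟩ := h P hP
  rw [← preimage_thickClosure_image_eq_of_preimage_eq hQ hQP]
  exact Set.preimage_mono (thickClosure_mono (Set.image_mono hIP))

lemma exists_isPrimeThick_preimage_eq [F.CommShift ℤ] [F.IsTriangulated] {P : Set D}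
    (hP : IsPrimeThick P)
    (hF : thickClosure (F.obj '' P) ≠ thickClosure (F.obj '' thickInterAbove P)) :
    ∃ Q : Set E, IsPrimeThick Q ∧ F.obj ⁻¹' Q = P ∧ P ⊂ F.obj ⁻¹' thickInterAbove Q := by
  obtain ⟨x, hxbar, hFx⟩ : ∃ x ∈ thickInterAbove P, F.obj x ∉ thickClosure (F.obj '' P) := by
    by_contra! hcon
    exact hF <| subset_antisymm (thickClosure_mono (Set.image_mono hP.2.1))
      ((thickClosure_image_subset_iff (isThickSubcat_thickClosure _)).2 hcon)
  obtain ⟨Q, hFPQ, hQ, hFxQ, hFxQbar⟩ :=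
    exists_isPrimeThick_of_notMem (isThickSubcat_thickClosure _) hFx
  have hPQ : P ⊆ F.obj ⁻¹' Q := (thickClosure_image_subset_iff hQ.1).1 hFPQ
  -- `F⁻¹(Q)` misses `x ∈ P̄`, so it cannot strictly contain `P`.
  have hQP : F.obj ⁻¹' Q = P := by
    by_contra hne
    exact hFxQ (thickInterAbove_subset hQ.1.preimage ⟨hPQ, fun h => hne (h.antisymm hPQ)⟩ hxbar)
  exact ⟨Q, hQ, hQP, hPQ.trans (Set.preimage_mono hQ.2.1),
    fun h => hFxQ (hPQ (h hFxQbar))⟩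

end Pretriangulated

end Functor

/-- For an exact (triangulated) functor `F : D → E` (commuting with shifts and sending
distinguished triangles to distinguished triangles), preimages of thick subcategories
are thick, and the following are equivalent:
(1) `I ↦ ⟨F(I)⟩` is injective on thick subcategories of `D`;
(2) `J ↦ F⁻¹(J)` is surjective from thick subcategories of `E` onto those of `D`;
(3) for every prime thick `P ⊆ D`, `⟨F(P)⟩ ≠ ⟨F(P̄)⟩`;
(4) for every prime thick `P ⊆ D` there is a prime thick `Q ⊆ E` with `F⁻¹(Q) = P` and
    `F⁻¹(Q̄) ⊋ P`;
(5) `F⁻¹ ∘ ⟨F⟩` is the identity on thick subcategories of `D`. -/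
theorem stmt_17 (D : Type u) [Category.{v} D] [Preadditive D] [HasZeroObject D]
    [HasShift D ℤ] [∀ n : ℤ, (shiftFunctor D n).Additive] [Pretriangulated D]
    (E : Type u') [Category.{v'} E] [Preadditive E] [HasZeroObject E]
    [HasShift E ℤ] [∀ n : ℤ, (shiftFunctor E n).Additive] [Pretriangulated E]
    (F : D ⥤ E) [F.CommShift ℤ] [F.IsTriangulated] :
    (∀ J : Set E, IsThickSubcat J → IsThickSubcat (F.obj ⁻¹' J)) ∧
    [ Set.InjOn (fun I : Set D => thickClosure (F.obj '' I)) {I : Set D | IsThickSubcat I},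
      ∀ I : Set D, IsThickSubcat I → ∃ J : Set E, IsThickSubcat J ∧ F.obj ⁻¹' J = I,
      ∀ P : Set D, IsPrimeThick P →
        thickClosure (F.obj '' P) ≠ thickClosure (F.obj '' thickInterAbove P),
      ∀ P : Set D, IsPrimeThick P → ∃ Q : Set E, IsPrimeThick Q ∧
        F.obj ⁻¹' Q = P ∧ P ⊂ F.obj ⁻¹' thickInterAbove Q,
      ∀ I : Set D, IsThickSubcat I → F.obj ⁻¹' thickClosure (F.obj '' I) = I ].TFAE := by
  refine ⟨fun J hJ => hJ.preimage, ?_⟩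
  tfae_have 1 → 5 := fun h1 I hI =>
    h1 (isThickSubcat_thickClosure _).preimage hI (thickClosure_image_preimage_thickClosure_image I)
  tfae_have 5 → 1 := fun h5 I hI I' hI' h => by
    rw [← h5 I hI, ← h5 I' hI']
    exact congrArg (F.obj ⁻¹' ·) h
  tfae_have 5 → 2 := fun h5 I hI => ⟨_, isThickSubcat_thickClosure _, h5 I hI⟩
  tfae_have 2 → 5 := fun h2 I hI =>
    let ⟨_, hJ, hJI⟩ := h2 I hI
    preimage_thickClosure_image_eq_of_preimage_eq hJ hJI
  tfae_have 5 → 3 := fun h5 P hP hF => by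
    apply hP.2.2
    rw [← h5 _ (isThickSubcat_thickInterAbove P), ← hF, h5 P hP.1]
  tfae_have 3 → 4 := fun h3 P hP => exists_isPrimeThick_preimage_eq hP (h3 P hP)
  tfae_have 4 → 5 := fun h4 _ => preimage_thickClosure_image_eq_of_isPrimeThick fun P hP =>
    let ⟨Q, hQ, hQP, _⟩ := h4 P hP
    ⟨Q, hQ.1, hQP⟩
  tfae_finish
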